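/- Let q ≥ 3 be an integer and let [ω₀, ω₁, …, ω_{q−1}] be a composition of n. Let t_n be the least nonnegative integer with t_n ≡ n (mod Q), and let Γ(t_n, q) = L(t_n, q) − t_n. Then there exists a q-ary constant-composition code of length n with composition [ω₀, ω₁, …, ω_{q−1}], minimum distance at least 3, and size M satisfying M · (n + Γ(t_n, q)) ≥ n!/(ω₀!·ω₁!⋯ω_{q−1}!). -/

import Mathlib

/-!
The words of composition `ω` number `n! / ∏ ω_a!` (orbit–stabilizer for `Perm (Fin n)` acting
on words). Sort them by the syndrome `∑ i * c i` modulo `m = n + Γ`; some class keeps at least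
a `1/m` fraction. Two words of the same composition have the same symbol sum, so if they differ
in at most two positions their difference `d` is supported on some `{i, j}` with `d i = -d j`,
and equal syndromes give `m ∣ (i - j) * d i`. Since `m ≡ L (mod Q)`, `m` is coprime to every
`0 < |d i| < q`, forcing `m ∣ i - j`, impossible as `|i - j| < n ≤ m`.
-/

open Finset

section Composition

open Nat Equiv

variable {α ι : Type*} [Fintype α] [DecidableEq α] [Fintype ι] [DecidableEq ι]

def wordsOfComposition (ω : ι → ℕ) : Finset (α → ι) := {c | ∀ a, #{i | c i = a} = ω a}

lemma mem_wordsOfComposition {ω : ι → ℕ} {c : α → ι} :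
    c ∈ wordsOfComposition ω ↔ ∀ a, #{i | c i = a} = ω a := by
  simp [wordsOfComposition]

lemma comp_perm_mem_wordsOfComposition (c : α → ι) (σ : Perm α) :
    c ∘ σ ∈ wordsOfComposition (fun a => #{i | c i = a}) := by
  refine mem_wordsOfComposition.2 fun a => ?_
  simp_rw [← Fintype.card_subtype]
  exact Fintype.card_congr (σ.subtypeEquiv fun _ => Iff.rfl)

lemma card_perm_comp_eq_prod_factorial (c₀ c : α → ι)
    (hc : c ∈ wordsOfComposition (fun a => #{i | c₀ i = a})) :
    Fintype.card {σ : Perm α // c₀ ∘ σ = c} = ∏ a, (#{i | c₀ i = a})! := by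
  have hfiber (a : ι) : Fintype.card {i // c i = a} = Fintype.card {i // c₀ i = a} := by
    simp_rw [Fintype.card_subtype]
    exact mem_wordsOfComposition.1 hc a
  set τ : Perm α := ofFiberEquiv fun a => Fintype.equivOfCardEq (hfiber a)
  have hτ : c₀ ∘ τ = c := funext (ofFiberEquiv_map _)
  calc Fintype.card {σ : Perm α // c₀ ∘ σ = c}
      = Fintype.card {g : Perm α // c₀ ∘ g = c₀} := by
        refine Fintype.card_congr (subtypeEquiv (Equiv.mulRight τ⁻¹) fun σ => ?_)
        rw [← hτ]
        simp only [funext_iff, Function.comp_apply, coe_mulRight, Perm.mul_apply]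
        exact ⟨fun h x => by simpa using h (τ⁻¹ x), fun h x => by simpa using h (τ x)⟩
    _ = ∏ a, (#{i | c₀ i = a})! := by
        simp_rw [DomMulAct.stabilizer_card, Fintype.card_subtype]

theorem card_wordsOfComposition_mul_prod_factorial (c₀ : α → ι) :
    #(wordsOfComposition (α := α) (fun a => #{i | c₀ i = a})) * ∏ a, (#{i | c₀ i = a})!
      = (Fintype.card α)! := by
  rw [← Fintype.card_perm (α := α), ← Finset.card_univ,
    card_eq_sum_card_fiberwise (t := wordsOfComposition _)
      fun σ _ => comp_perm_mem_wordsOfComposition c₀ σ,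
    ← smul_eq_mul, ← sum_const]
  refine sum_congr rfl fun c hc => ?_
  rw [← card_perm_comp_eq_prod_factorial c₀ c hc, Fintype.card_subtype]

theorem card_wordsOfComposition {ω : ι → ℕ} (hω : ∑ a, ω a = Fintype.card α) :
    #(wordsOfComposition (α := α) ω) = Nat.multinomial univ ω := by
  obtain ⟨e⟩ : Nonempty (α ≃ Σ a, Fin (ω a)) := Fintype.card_eq.1 (by simp [hω])
  have hω' (a : ι) : #{i | (e i).1 = a} = ω a := by
    rw [← Fintype.card_subtype, Fintype.card_congr ((e.subtypeEquiv fun _ => Iff.rfl).trans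
      (sigmaSubtype a)), Fintype.card_fin]
  have h := card_wordsOfComposition_mul_prod_factorial fun i => (e i).1
  simp_rw [hω'] at h
  rw [← hω, ← multinomial_spec, mul_comm] at h
  exact Nat.eq_of_mul_eq_mul_left (prod_pos fun a _ => factorial_pos _) h

lemma sum_comp_eq_of_mem_wordsOfComposition {M : Type*} [AddCommMonoid M] {ω : ι → ℕ}
    {c : α → ι} (hc : c ∈ wordsOfComposition ω) (f : ι → M) :
    ∑ i, f (c i) = ∑ a, ω a • f a := by
  rw [← sum_fiberwise univ c fun i => f (c i)]
  refine sum_congr rfl fun a _ => ?_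
  rw [sum_congr rfl fun i hi => congrArg f (mem_filter.1 hi).2, sum_const,
    mem_wordsOfComposition.1 hc a]

end Composition

lemma Finset.exists_card_le_card_fiber_mul {α β : Type*} [Fintype β] [Nonempty β]
    [DecidableEq β] (s : Finset α) (f : α → β) :
    ∃ y, #s ≤ #{x ∈ s | f x = y} * Fintype.card β := by
  have hβ : (0 : ℚ) < Fintype.card β := by exact_mod_cast Fintype.card_pos
  obtain ⟨y, -, hy⟩ := exists_le_card_fiber_of_nsmul_le_card_of_maps_to (f := f)
    (fun _ _ => mem_univ _) univ_nonempty (b := (#s : ℚ) / Fintype.card β)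
    (by rw [card_univ, nsmul_eq_mul, mul_div_cancel₀ _ hβ.ne'])
  exact ⟨y, by exact_mod_cast (div_le_iff₀ hβ).1 hy⟩

lemma Nat.coprime_of_coprime_prod_primes_lt {m q b : ℕ}
    (h : m.Coprime (∏ p ∈ (range q).filter Nat.Prime, p)) (hb : 0 < b) (hbq : b < q) :
    m.Coprime b := by
  rw [Nat.coprime_prod_right_iff] at h
  refine Nat.coprime_of_dvd fun p hp hpm hpb => ?_
  have hpq : p < q := (Nat.le_of_dvd hb hpb).trans_lt hbq
  exact (Nat.Prime.coprime_iff_not_dvd hp).1 (h p (mem_filter.2 ⟨mem_range.2 hpq, hp⟩)).symm hpm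

lemma Nat.coprime_add_sub_mod {n Q L : ℕ} (hL : n % Q ≤ L) (h : L.Coprime Q) :
    (n + (L - n % Q)).Coprime Q := by
  have hdiv := Nat.mod_add_div' n Q
  rw [show n + (L - n % Q) = L + n / Q * Q by omega, Nat.coprime_add_mul_right_left]
  exact h

section Syndrome

variable {n q m : ℕ}

def syndrome (m : ℕ) (c : Fin n → Fin q) : ZMod m :=
  ((∑ i : Fin n, ((i : ℕ) : ℤ) * ((c i : ℕ) : ℤ) : ℤ) : ZMod m)

lemma eq_of_dvd_sub_mul (hnm : n ≤ m) (hcop : ∀ b, 0 < b → b < q → m.Coprime b)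
    {i j : Fin n} {e : ℤ} (he : e ≠ 0) (heq : e.natAbs < q)
    (h : (m : ℤ) ∣ (((i : ℕ) : ℤ) - (j : ℕ)) * e) : i = j := by
  rw [Int.natCast_dvd, Int.natAbs_mul] at h
  have hdvd := (hcop _ (Int.natAbs_pos.2 he) heq).dvd_of_dvd_mul_right h
  have := Nat.eq_zero_of_dvd_of_lt hdvd (by omega)
  omega

lemma three_le_card_support (hnm : n ≤ m) (hcop : ∀ b, 0 < b → b < q → m.Coprime b)
    {d : Fin n → ℤ} (hd : d ≠ 0) (hbound : ∀ i, (d i).natAbs < q) (hsum : ∑ i, d i = 0)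
    (hmoment : (m : ℤ) ∣ ∑ i : Fin n, ((i : ℕ) : ℤ) * d i) :
    3 ≤ #{i | d i ≠ 0} := by
  set D : Finset (Fin n) := {i | d i ≠ 0}
  have hmem : ∀ i ∈ D, d i ≠ 0 := fun i hi => (mem_filter.1 hi).2
  have hsumD : ∑ i ∈ D, d i = 0 := by rwa [sum_filter_ne_zero]
  have hmomentD : (m : ℤ) ∣ ∑ i ∈ D, ((i : ℕ) : ℤ) * d i := by
    rwa [sum_filter_of_ne fun i _ h => right_ne_zero_of_mul h]
  have hD : D.Nonempty := by
    obtain ⟨i, hi⟩ := Function.ne_iff.1 hd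
    exact ⟨i, mem_filter.2 ⟨mem_univ i, hi⟩⟩
  by_contra! hlt
  interval_cases hcard : #D
  · exact hD.card_ne_zero hcard
  · obtain ⟨i, hDi⟩ := card_eq_one.1 hcard
    rw [hDi, sum_singleton] at hsumD
    exact hmem i (hDi ▸ mem_singleton_self i) hsumD
  · obtain ⟨i, j, hij, hDij⟩ := card_eq_two.1 hcard
    have hi : d i ≠ 0 := hmem i (hDij ▸ mem_insert_self i {j})
    rw [hDij, sum_pair hij] at hsumD hmomentD
    have hswap : ((i : ℕ) : ℤ) * d i + ((j : ℕ) : ℤ) * d j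
        = (((i : ℕ) : ℤ) - (j : ℕ)) * d i := by
      linear_combination ((j : ℕ) : ℤ) * hsumD
    exact hij (eq_of_dvd_sub_mul hnm hcop hi (hbound i) (hswap ▸ hmomentD))

lemma three_le_hammingDist_of_syndrome_eq (hnm : n ≤ m)
    (hcop : ∀ b, 0 < b → b < q → m.Coprime b) {u v : Fin n → Fin q} (huv : u ≠ v)
    (hsum : ∑ i, (u i : ℕ) = ∑ i, (v i : ℕ)) (hsyn : syndrome m u = syndrome m v) :
    3 ≤ hammingDist u v := by
  set d : Fin n → ℤ := fun i => ((u i : ℕ) : ℤ) - (v i : ℕ)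
  have hd (i : Fin n) : d i = 0 ↔ u i = v i := by simp [d, sub_eq_zero, Fin.val_inj]
  have hsupp : #{i | d i ≠ 0} = hammingDist u v := by simp_rw [Ne, hd]; rfl
  rw [← hsupp]
  refine three_le_card_support hnm hcop ?_ (fun i => ?_) ?_ ?_
  · exact fun h => huv (funext fun i => (hd i).1 (congrFun h i))
  · have := (u i).isLt; have := (v i).isLt; simp only [d]; omega
  · simp only [d]
    rw [sum_sub_distrib, ← Nat.cast_sum, ← Nat.cast_sum, hsum, sub_self]
  · rw [syndrome, syndrome, eq_comm, ZMod.intCast_eq_intCast_iff_dvd_sub,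
      ← sum_sub_distrib] at hsyn
    simpa only [d, mul_sub] using hsyn

end Syndrome

theorem stmt_7_general (q n : ℕ) (hq : 3 ≤ q) (ω : Fin q → ℕ) (hω : ∑ a, ω a = n)
    (Q : ℕ) (hQ : Q = ∏ p ∈ (Finset.range q).filter Nat.Prime, p)
    (t : ℕ) (ht : t = n % Q)
    (L : ℕ) (hL1 : t ≤ L) (hL2 : Nat.gcd L Q = 1) :
    ∃ C : Finset (Fin n → Fin q),
      (∀ c ∈ C, ∀ a : Fin q, (Finset.univ.filter (fun i => c i = a)).card = ω a) ∧
      (∀ u ∈ C, ∀ v ∈ C, u ≠ v → 3 ≤ hammingDist u v) ∧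
      Nat.multinomial Finset.univ ω ≤ C.card * (n + (L - t)) := by
  subst hQ ht
  set m := n + (L - n % _)
  have hcop (b : ℕ) (hb : 0 < b) (hbq : b < q) : m.Coprime b :=
    Nat.coprime_of_coprime_prod_primes_lt (Nat.coprime_add_sub_mod hL1 hL2) hb hbq
  have : NeZero m := ⟨fun h => by simpa [h] using hcop 2 two_pos hq⟩
  set W : Finset (Fin n → Fin q) := wordsOfComposition ω
  obtain ⟨y, hy⟩ := W.exists_card_le_card_fiber_mul (syndrome m)
  refine ⟨{c ∈ W | syndrome m c = y}, fun c hc => mem_wordsOfComposition.1 (mem_filter.1 hc).1,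
    fun u hu v hv huv => ?_, ?_⟩
  · rw [mem_filter] at hu hv
    refine three_le_hammingDist_of_syndrome_eq (Nat.le_add_right _ _) hcop huv ?_
      (hu.2.trans hv.2.symm)
    rw [sum_comp_eq_of_mem_wordsOfComposition hu.1, sum_comp_eq_of_mem_wordsOfComposition hv.1]
  · rw [← card_wordsOfComposition (α := Fin n) (by simpa using hω)]
    rwa [ZMod.card m] at hy

/-- Let `q ≥ 3` and let `ω` be a composition of `n`.
Let `Q` be the product of all primes `p` with `p ≤ q - 1`, let `t` be the least
nonnegative integer with `t ≡ n (mod Q)` (i.e. `t = n % Q`), and let `L` be the least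
integer `l ≥ t` with `gcd(l, Q) = 1`; set `Γ = L - t`. Then there is a `q`-ary
constant-composition code of length `n` with composition `ω`, minimum distance at least
`3`, and size `M` with `M · (n + Γ) ≥ n!/(ω₀!⋯ω_{q-1}!)`. -/
theorem stmt_7 (q n : ℕ) (hq : 3 ≤ q) (ω : Fin q → ℕ) (hω : ∑ a, ω a = n)
    (Q : ℕ) (hQ : Q = ∏ p ∈ (Finset.range q).filter Nat.Prime, p)
    (t : ℕ) (ht : t = n % Q)
    (L : ℕ) (hL1 : t ≤ L) (hL2 : Nat.gcd L Q = 1)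
    (hL3 : ∀ m : ℕ, t ≤ m → Nat.gcd m Q = 1 → L ≤ m) :
    ∃ C : Finset (Fin n → Fin q),
      (∀ c ∈ C, ∀ a : Fin q, (Finset.univ.filter (fun i => c i = a)).card = ω a) ∧
      (∀ u ∈ C, ∀ v ∈ C, u ≠ v → 3 ≤ hammingDist u v) ∧
      Nat.multinomial Finset.univ ω ≤ C.card * (n + (L - t)) :=
  stmt_7_general q n hq ω hω Q hQ t ht L hL1 hL2
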